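/- Let C be a Hermitian 2L×2L projection matrix (eigenvalues in {0,1}) with exactly L eigenvalues equal to 1, decomposed as C = D + M with D a pinching and M Hermitian. If the eigenvalues of M in nonincreasing order satisfy λ_j^↓(M) ≤ c·j^{-β+1} for all j ≥ 1 (with c > 1, β > 2), then ∑_j h(ξ_j(D)) ≤ 8c·∑_{j=1}^∞ h(min(c·j^{1-β}, 1/2)) < ∞, where h is the binary entropy and ξ_j(D) the eigenvalues of D. -/

import Mathlib

/-!
Write `M = C - D` for the off-diagonal blocks of the projection `C`. Blockwise, `C² = C` gives
`M² = D - D²`, so every eigenvalue `ξ` of `D` lies in `[0, 1]` with `ξ - ξ² = μ²` for an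
eigenvalue `μ` of `M`, whence `h(ξ) ≤ h(min(2μ², 1/2))`. Conjugation by the block sign matrix
negates `M`, so its spectrum is symmetric and the sum over all `μ` is twice the sum over the
positive ones; for those, `μ ≤ c j^(1-β)` gives `h(min(2μ², 1/2)) ≤ h(min(c j^(1-β), 1/2))`.
This is the bound with `2` in place of `8c`. Summability comes from `h(y) = O(y^(1-s))` for
every `s > 0`.
-/

/-- The binary Shannon entropy with base-2 logarithm (with `h 0 = h 1 = 0`). -/
noncomputable def binEnt (x : ℝ) : ℝ :=
  -(x * Real.logb 2 x) - (1 - x) * Real.logb 2 (1 - x)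

/-- The pinching of a matrix with respect to the partition of the index set
into a block `A` and its complement. -/
def pinching {n : ℕ} (C : Matrix (Fin n) (Fin n) ℂ) (A : Finset (Fin n)) :
    Matrix (Fin n) (Fin n) ℂ :=
  Matrix.of fun j k => if (j ∈ A ↔ k ∈ A) then C j k else 0

/-- `a` enumerates the eigenvalues of the Hermitian matrix `A` in nonincreasing order. -/
def IsSortedEigenvalues {n : ℕ} {A : Matrix (Fin n) (Fin n) ℂ}
    (hA : A.IsHermitian) (a : Fin n → ℝ) : Prop :=
  Antitone a ∧ ∃ σ : Equiv.Perm (Fin n), a = hA.eigenvalues ∘ σ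

open Real Matrix Polynomial

lemma binEnt_eq_binEntropy_div_log_two (x : ℝ) : binEnt x = binEntropy x / log 2 := by
  unfold binEnt binEntropy logb
  rw [log_inv, log_inv]
  ring

lemma binEnt_nonneg {x : ℝ} (h0 : 0 ≤ x) (h1 : x ≤ 1) : 0 ≤ binEnt x := by
  rw [binEnt_eq_binEntropy_div_log_two]
  exact div_nonneg (binEntropy_nonneg h0 h1) (log_nonneg one_le_two)

lemma binEnt_one_sub (x : ℝ) : binEnt (1 - x) = binEnt x := by
  rw [binEnt_eq_binEntropy_div_log_two, binEnt_eq_binEntropy_div_log_two, binEntropy_one_sub]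

lemma binEnt_le_binEnt {x y : ℝ} (hx : 0 ≤ x) (hxy : x ≤ y) (hy : y ≤ 1 / 2) :
    binEnt x ≤ binEnt y := by
  rw [binEnt_eq_binEntropy_div_log_two, binEnt_eq_binEntropy_div_log_two]
  refine div_le_div_of_nonneg_right ?_ (log_nonneg one_le_two)
  exact binEntropy_strictMonoOn.monotoneOn ⟨hx, by linarith⟩ ⟨by linarith, by linarith⟩ hxy

lemma binEnt_min_half_nonneg {x : ℝ} (hx : 0 ≤ x) : 0 ≤ binEnt (min x (1 / 2)) :=
  binEnt_nonneg (le_min hx (by norm_num)) ((min_le_right _ _).trans (by norm_num))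

/-- Since `min x (1 - x) ≤ 2 x (1 - x)`, by symmetry and monotonicity of `h` on `[0, 1/2]`. -/
lemma binEnt_le_binEnt_min_two_mul_sub_sq {x : ℝ} (h0 : 0 ≤ x) (h1 : x ≤ 1) :
    binEnt x ≤ binEnt (min (2 * (x - x ^ 2)) (1 / 2)) := by
  rcases le_total x (1 / 2) with hx | hx
  · exact binEnt_le_binEnt h0 (le_min (by nlinarith) hx) (min_le_right _ _)
  · rw [← binEnt_one_sub]
    exact binEnt_le_binEnt (by linarith) (le_min (by nlinarith) (by linarith)) (min_le_right _ _)

lemma binEnt_min_two_mul_sq_le {x y : ℝ} (hx : 0 ≤ x) (hxy : x ≤ y) :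
    binEnt (min (2 * x ^ 2) (1 / 2)) ≤ binEnt (min y (1 / 2)) := by
  refine binEnt_le_binEnt (le_min (by positivity) (by norm_num)) ?_ (min_le_right _ _)
  rcases le_total y (1 / 2) with hy | hy
  · rw [min_eq_left hy]
    exact (min_le_left _ _).trans (by nlinarith)
  · rw [min_eq_right hy]
    exact min_le_right _ _

lemma negMulLog_le_rpow_div {y s : ℝ} (hy : 0 < y) (hs : 0 < s) :
    negMulLog y ≤ y ^ (1 - s) / s := by
  have hlog : log y⁻¹ ≤ y⁻¹ ^ s / s := log_le_rpow_div (inv_nonneg.mpr hy.le) hs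
  calc negMulLog y = y * log y⁻¹ := by rw [negMulLog, log_inv]; ring
    _ ≤ y * (y⁻¹ ^ s / s) := mul_le_mul_of_nonneg_left hlog hy.le
    _ = y ^ (1 - s) / s := by
      rw [inv_rpow hy.le, rpow_sub hy, rpow_one]
      field_simp

lemma binEntropy_le_rpow {y s : ℝ} (hy0 : 0 < y) (hy1 : y ≤ 1) (hs : 0 < s) :
    binEntropy y ≤ (1 / s + 1) * y ^ (1 - s) := by
  have hy : y ≤ y ^ (1 - s) := by
    simpa using rpow_le_rpow_of_exponent_ge hy0 hy1 (by linarith : 1 - s ≤ 1)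
  have h1 := negMulLog_le_rpow_div hy0 hs
  have h2 := negMulLog_le_one_sub_self (by linarith : 0 ≤ 1 - y)
  rw [binEntropy_eq_negMulLog_add_negMulLog_one_sub]
  linarith [show (1 / s + 1) * y ^ (1 - s) = y ^ (1 - s) / s + y ^ (1 - s) by ring]

/-- Compare with the `p`-series of exponent `(1 - β) (1 - s) = -β/2`, using
`h(y) = O(y ^ (1 - s))` with `s = (β - 2) / (2 (β - 1))`. -/
lemma summable_binEnt_min_rpow {c β : ℝ} (hc : 0 < c) (hβ : 2 < β) :
    Summable (fun j : ℕ => binEnt (min (c * ((j + 1 : ℝ)) ^ (1 - β)) (1 / 2))) := by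
  set s : ℝ := (β - 2) / (2 * (β - 1))
  have hs0 : 0 < s := div_pos (by linarith) (by linarith)
  have hs1 : s ≤ 1 := (div_le_one (by linarith)).mpr (by linarith)
  have hexp : (1 - β) * (1 - s) = -(β / 2) := by
    have : β - 1 ≠ 0 := by linarith
    simp only [s]
    field_simp
    ring
  have hpseries : Summable (fun j : ℕ => ((j : ℝ) + 1) ^ ((1 - β) * (1 - s))) := by
    have := (summable_nat_add_iff 1).mpr
      (summable_nat_rpow.mpr (by linarith : (1 - β) * (1 - s) < -1))
    simpa only [Nat.cast_add, Nat.cast_one] using this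
  refine .of_nonneg_of_le (fun j => binEnt_min_half_nonneg (by positivity)) (fun j => ?_)
    (hpseries.mul_left ((1 / s + 1) * c ^ (1 - s) / log 2))
  set y := c * ((j : ℝ) + 1) ^ (1 - β)
  have hy : 0 < y := by positivity
  have hmin : 0 < min y (1 / 2) := lt_min hy (by norm_num)
  rw [binEnt_eq_binEntropy_div_log_two]
  calc binEntropy (min y (1 / 2)) / log 2
      ≤ (1 / s + 1) * min y (1 / 2) ^ (1 - s) / log 2 := by
        gcongr
        exact binEntropy_le_rpow hmin ((min_le_right _ _).trans (by norm_num)) hs0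
    _ ≤ (1 / s + 1) * y ^ (1 - s) / log 2 := by
        have := rpow_le_rpow hmin.le (min_le_left y (1 / 2)) (by linarith : 0 ≤ 1 - s)
        gcongr
    _ = (1 / s + 1) * c ^ (1 - s) / log 2 * ((j : ℝ) + 1) ^ ((1 - β) * (1 - s)) := by
        rw [mul_rpow hc.le (by positivity), ← rpow_mul (by positivity)]
        ring

lemma sum_comp_eq_of_map_eq {ι : Type*} [Fintype ι] {f g : ι → ℝ}
    (h : Multiset.map f Finset.univ.val = Multiset.map g Finset.univ.val) (F : ℝ → ℝ) :
    ∑ i, F (f i) = ∑ i, F (g i) := by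
  simpa [Multiset.map_map] using congrArg (fun m => (m.map F).sum) h

/-- For an even `g` with `g 0 = 0`, `g x = g (max x 0) + g (max (-x) 0)`. -/
lemma sum_eq_two_mul_sum_max_zero {ι : Type*} [Fintype ι] {μ : ι → ℝ}
    (hμ : Multiset.map μ Finset.univ.val = Multiset.map (fun i => -μ i) Finset.univ.val)
    {g : ℝ → ℝ} (heven : ∀ x, g (-x) = g x) (hzero : g 0 = 0) :
    ∑ i, g (μ i) = 2 * ∑ i, g (max (μ i) 0) := by
  have hsplit : ∀ x, g x = g (max x 0) + g (max (-x) 0) := by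
    intro x
    rcases le_total x 0 with hx | hx
    · rw [max_eq_right hx, max_eq_left (by linarith), hzero, heven, zero_add]
    · rw [max_eq_left hx, max_eq_right (by linarith), hzero, add_zero]
  rw [Finset.sum_congr rfl fun i _ => hsplit (μ i), Finset.sum_add_distrib,
    ← sum_comp_eq_of_map_eq hμ (fun x => g (max x 0))]
  ring

section Spectrum

variable {n 𝕜 : Type*} [Fintype n] [DecidableEq n] [RCLike 𝕜]

theorem Matrix.IsHermitian.map_eigenvalues_eq_of_charpoly_cfc_eq {A B : Matrix n n 𝕜}
    (hA : A.IsHermitian) (hB : B.IsHermitian) {f g : ℝ → ℝ}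
    (h : (cfc f A).charpoly = (cfc g B).charpoly) :
    Multiset.map (f ∘ hA.eigenvalues) Finset.univ.val =
      Multiset.map (g ∘ hB.eigenvalues) Finset.univ.val := by
  rw [hA.charpoly_cfc_eq, hB.charpoly_cfc_eq] at h
  have hroots := congrArg Polynomial.roots h
  rw [roots_prod _ _ (by simp [Finset.prod_ne_zero_iff, X_sub_C_ne_zero]),
    roots_prod _ _ (by simp [Finset.prod_ne_zero_iff, X_sub_C_ne_zero])] at hroots
  refine Multiset.map_injective (f := ((↑) : ℝ → 𝕜)) RCLike.ofReal_injective ?_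
  simpa [Multiset.map_map] using hroots

theorem Matrix.IsHermitian.map_eigenvalues_sub_sq_eq {D M : Matrix n n 𝕜}
    (hD : D.IsHermitian) (hM : M.IsHermitian) (h : M * M = D - D * D) :
    Multiset.map (fun i => hD.eigenvalues i - hD.eigenvalues i ^ 2) Finset.univ.val =
      Multiset.map (fun i => hM.eigenvalues i ^ 2) Finset.univ.val := by
  refine hD.map_eigenvalues_eq_of_charpoly_cfc_eq (f := fun x => x - x ^ 2) hM
    (g := fun x => x ^ 2) ?_
  have := hD.isSelfAdjoint
  have := hM.isSelfAdjoint
  rw [cfc_sub (fun x : ℝ => x) (fun x => x ^ 2) D, cfc_pow (fun x : ℝ => x) 2 D,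
    cfc_pow (fun x : ℝ => x) 2 M, cfc_id' ℝ D, cfc_id' ℝ M, sq, sq, h]

theorem Matrix.IsHermitian.map_eigenvalues_neg_eq {M S : Matrix n n 𝕜} (hM : M.IsHermitian)
    (hS : S * S = 1) (h : S * M * S = -M) :
    Multiset.map hM.eigenvalues Finset.univ.val =
      Multiset.map (fun i => -hM.eigenvalues i) Finset.univ.val := by
  refine hM.map_eigenvalues_eq_of_charpoly_cfc_eq (f := fun x => x) hM (g := fun x => -x) ?_
  have := hM.isSelfAdjoint
  rw [cfc_id' ℝ M, cfc_neg_id (a := M), ← h, charpoly_mul_comm, ← mul_assoc, hS, one_mul]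

/-- `M * M = D - D * D` forces the eigenvalues `ξ` of `D` into `[0, 1]`, with `ξ - ξ²` running
through the squares `μ²` of the eigenvalues of `M`. -/
theorem Matrix.IsHermitian.sum_binEnt_eigenvalues_le {D M : Matrix n n 𝕜}
    (hD : D.IsHermitian) (hM : M.IsHermitian) (h : M * M = D - D * D) :
    ∑ i, binEnt (hD.eigenvalues i) ≤ ∑ i, binEnt (min (2 * hM.eigenvalues i ^ 2) (1 / 2)) := by
  have hmap := hD.map_eigenvalues_sub_sq_eq hM h
  have hmem : ∀ i, 0 ≤ hD.eigenvalues i - hD.eigenvalues i ^ 2 := by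
    intro i
    obtain ⟨k, -, hk⟩ := Multiset.mem_map.mp
      (hmap ▸ Multiset.mem_map_of_mem _ (Finset.mem_univ i))
    exact hk ▸ sq_nonneg _
  calc ∑ i, binEnt (hD.eigenvalues i)
      ≤ ∑ i, binEnt (min (2 * (hD.eigenvalues i - hD.eigenvalues i ^ 2)) (1 / 2)) :=
        Finset.sum_le_sum fun i _ =>
          binEnt_le_binEnt_min_two_mul_sub_sq (by nlinarith [hmem i]) (by nlinarith [hmem i])
    _ = ∑ i, binEnt (min (2 * hM.eigenvalues i ^ 2) (1 / 2)) :=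
        sum_comp_eq_of_map_eq hmap fun u => binEnt (min (2 * u) (1 / 2))

end Spectrum

section Pinching

variable {n : ℕ}

def blockSign (A : Finset (Fin n)) : Matrix (Fin n) (Fin n) ℂ :=
  diagonal fun i => if i ∈ A then 1 else -1

lemma blockSign_mul_self (A : Finset (Fin n)) : blockSign A * blockSign A = 1 := by
  rw [blockSign, diagonal_mul_diagonal, ← diagonal_one]
  congr 1
  ext i
  split_ifs <;> norm_num

lemma sub_pinching_apply (C : Matrix (Fin n) (Fin n) ℂ) (A : Finset (Fin n)) (j k : Fin n) :
    (C - pinching C A) j k = if (j ∈ A ↔ k ∈ A) then 0 else C j k := by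
  simp only [Matrix.sub_apply, pinching, of_apply]
  split_ifs <;> simp

lemma blockSign_mul_sub_pinching_mul_blockSign (C : Matrix (Fin n) (Fin n) ℂ)
    (A : Finset (Fin n)) :
    blockSign A * (C - pinching C A) * blockSign A = -(C - pinching C A) := by
  ext j k
  rw [blockSign, mul_diagonal, diagonal_mul, neg_apply, sub_pinching_apply]
  by_cases hj : j ∈ A <;> by_cases hk : k ∈ A <;> simp [hj, hk]

/-- Blockwise, with `C = [[P, Q], [Q*, R]]`: `C² = C` gives `P - P² = Q Q*` and
`R - R² = Q* Q`. -/
lemma sub_pinching_mul_self {C : Matrix (Fin n) (Fin n) ℂ} (hC : C * C = C)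
    (A : Finset (Fin n)) :
    (C - pinching C A) * (C - pinching C A) = pinching C A - pinching C A * pinching C A := by
  ext j k
  rw [Matrix.sub_apply, mul_apply, mul_apply, eq_sub_iff_add_eq, ← Finset.sum_add_distrib]
  have hP : pinching C A j k = ∑ l, if (j ∈ A ↔ k ∈ A) then C j l * C l k else 0 := by
    by_cases h : (j ∈ A ↔ k ∈ A)
    · simp only [pinching, of_apply, if_pos h, ← mul_apply, hC]
    · simp only [pinching, of_apply, if_neg h, Finset.sum_const_zero]
  rw [hP]
  refine Finset.sum_congr rfl fun l _ => ?_
  rw [sub_pinching_apply, sub_pinching_apply]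
  by_cases hj : j ∈ A <;> by_cases hk : k ∈ A <;> by_cases hl : l ∈ A <;>
    simp [pinching, hj, hk, hl]

end Pinching

theorem entropy_area_law_bound_general {L : ℕ}
    (C : Matrix (Fin (2 * L)) (Fin (2 * L)) ℂ)
    (hproj : C * C = C)
    (A : Finset (Fin (2 * L)))
    (D M : Matrix (Fin (2 * L)) (Fin (2 * L)) ℂ)
    (hD : D = pinching C A) (hM : M = C - D)
    (hDh : D.IsHermitian) (hMh : M.IsHermitian)
    (lam : Fin (2 * L) → ℝ) (hlam : IsSortedEigenvalues hMh lam)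
    (c β : ℝ) (hc : 1 < c) (hβ : 2 < β)
    (hdecay : ∀ j : Fin (2 * L), lam j ≤ c * ((j : ℕ) + 1 : ℝ) ^ (1 - β)) :
    Summable (fun j : ℕ => binEnt (min (c * ((j + 1 : ℝ)) ^ (1 - β)) (1 / 2))) ∧
    ∑ j, binEnt (hDh.eigenvalues j) ≤
      8 * c * ∑' j : ℕ, binEnt (min (c * ((j + 1 : ℝ)) ^ (1 - β)) (1 / 2)) := by
  have hsum := summable_binEnt_min_rpow (zero_lt_one.trans hc) hβ
  refine ⟨hsum, ?_⟩
  obtain ⟨-, σ, rfl⟩ := hlam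
  subst hD hM
  set g : ℝ → ℝ := fun t => binEnt (min (2 * t ^ 2) (1 / 2))
  calc ∑ j, binEnt (hDh.eigenvalues j) ≤ ∑ j, g (hMh.eigenvalues j) :=
        hDh.sum_binEnt_eigenvalues_le hMh (sub_pinching_mul_self hproj A)
    _ = 2 * ∑ j, g (max (hMh.eigenvalues j) 0) :=
        sum_eq_two_mul_sum_max_zero (hMh.map_eigenvalues_neg_eq (blockSign_mul_self A)
          (blockSign_mul_sub_pinching_mul_blockSign C A))
          (fun x => by simp [g]) (by simp [g, binEnt])
    _ = 2 * ∑ j, g (max (hMh.eigenvalues (σ j)) 0) := by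
        rw [Equiv.sum_comp σ (fun j => g (max (hMh.eigenvalues j) 0))]
    _ ≤ 2 * ∑ j : Fin (2 * L), binEnt (min (c * ((j : ℕ) + 1 : ℝ) ^ (1 - β)) (1 / 2)) := by
        gcongr with j
        exact binEnt_min_two_mul_sq_le (le_max_right _ _)
          (max_le (hdecay j) (by positivity))
    _ ≤ 2 * ∑' j : ℕ, binEnt (min (c * ((j + 1 : ℝ)) ^ (1 - β)) (1 / 2)) := by
        rw [Fin.sum_univ_eq_sum_range
          (fun j => binEnt (min (c * ((j : ℝ) + 1) ^ (1 - β)) (1 / 2)))]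
        gcongr
        exact hsum.sum_le_tsum _ fun j _ => binEnt_min_half_nonneg (by positivity)
    _ ≤ 8 * c * ∑' j : ℕ, binEnt (min (c * ((j + 1 : ℝ)) ^ (1 - β)) (1 / 2)) := by
        gcongr
        · exact tsum_nonneg fun j => binEnt_min_half_nonneg (by positivity)
        · linarith

theorem entropy_area_law_bound {L : ℕ}
    (C : Matrix (Fin (2 * L)) (Fin (2 * L)) ℂ) (hC : C.IsHermitian)
    (hproj : C * C = C)
    (hrank : (Finset.univ.filter (fun i => hC.eigenvalues i = 1)).card = L)
    (heig : ∀ i, hC.eigenvalues i = 0 ∨ hC.eigenvalues i = 1)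
    (A : Finset (Fin (2 * L)))
    (D M : Matrix (Fin (2 * L)) (Fin (2 * L)) ℂ)
    (hD : D = pinching C A) (hM : M = C - D)
    (hDh : D.IsHermitian) (hMh : M.IsHermitian)
    (lam : Fin (2 * L) → ℝ) (hlam : IsSortedEigenvalues hMh lam)
    (c β : ℝ) (hc : 1 < c) (hβ : 2 < β)
    (hdecay : ∀ j : Fin (2 * L), lam j ≤ c * ((j : ℕ) + 1 : ℝ) ^ (1 - β)) :
    Summable (fun j : ℕ => binEnt (min (c * ((j + 1 : ℝ)) ^ (1 - β)) (1 / 2))) ∧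
    ∑ j, binEnt (hDh.eigenvalues j) ≤
      8 * c * ∑' j : ℕ, binEnt (min (c * ((j + 1 : ℝ)) ^ (1 - β)) (1 / 2)) :=
  entropy_area_law_bound_general C hproj A D M hD hM hDh hMh lam hlam c β hc hβ hdecay
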